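/- arXiv:2306.09806 — 5 statements merged into one kernel-verified Lean document; each statement's English description precedes it below -/
import Mathlib

section
/- For the two-way within-transformation matrix J, for all integers q₁ ≥ 1 and q₂ ≥ 1 and all indices i, j ∈ {1,…,N}: |Σ_r (J_ir)^{q₁} (J_jr)^{q₂}| ≤ |J_ij|. -/
open Matrix Finset
open scoped Kronecker

noncomputable def Mmat (m : ℕ) : Matrix (Fin m) (Fin m) ℝ :=
  (1 : Matrix (Fin m) (Fin m) ℝ) - (m : ℝ)⁻¹ • Matrix.of (fun _ _ => (1 : ℝ))

lemma Mmat_apply (m : ℕ) (t s : Fin m) :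
    Mmat m t s = if t = s then 1 - (m : ℝ)⁻¹ else -(m : ℝ)⁻¹ := by
  simp [Mmat, Matrix.sub_apply, Matrix.one_apply, Matrix.smul_apply]
  split_ifs <;> ring

lemma sum_ite_one (m : ℕ) (t : Fin m) (X Z : ℝ) :
    ∑ s : Fin m, (if t = s then X else Z) = (m : ℝ) * Z + (X - Z) := by
  have : ∀ s : Fin m, (if t = s then X else Z) = Z + (if t = s then X - Z else 0) := by
    intro s; split_ifs <;> ring
  simp_rw [this, Finset.sum_add_distrib, Finset.sum_const, Finset.sum_ite_eq]
  simp [mul_comm]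

lemma sum_ite_two (m : ℕ) {t t' : Fin m} (h : t ≠ t') (X Y Z : ℝ) :
    ∑ s : Fin m, (if t = s then X else if t' = s then Y else Z)
      = (m : ℝ) * Z + (X - Z) + (Y - Z) := by
  have : ∀ s : Fin m, (if t = s then X else if t' = s then Y else Z)
      = Z + (if t = s then X - Z else 0) + (if t' = s then Y - Z else 0) := by
    intro s
    by_cases h1 : t = s
    · subst h1
      have h2 : ¬ (t' = t) := fun hh => h hh.symm
      rw [if_pos rfl, if_pos rfl, if_neg h2]
      ring
    · rw [if_neg h1, if_neg h1]
      split_ifs <;> ring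
  simp_rw [this, Finset.sum_add_distrib, Finset.sum_const, Finset.sum_ite_eq]
  simp [mul_comm]

lemma alpha_bounds {u : ℝ} (hu : 2 ≤ u) (k : ℕ) :
    0 ≤ (1 - u⁻¹)^k - (-u⁻¹)^k ∧ (1 - u⁻¹)^k - (-u⁻¹)^k ≤ 1 := by
  have hu0 : 0 < u := by linarith
  have hinv : 0 < u⁻¹ := by positivity
  have hinv2 : u⁻¹ ≤ 2⁻¹ := by
    rw [inv_le_inv₀ hu0 (by norm_num)]; exact hu
  have ha0 : 0 ≤ 1 - u⁻¹ := by linarith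
  have hba : u⁻¹ ≤ 1 - u⁻¹ := by linarith
  have ha1 : 1 - u⁻¹ ≤ 1 := by linarith
  have habs : |(-u⁻¹)^k| ≤ (1 - u⁻¹)^k := by
    rw [abs_pow, abs_neg, abs_of_pos hinv]
    exact pow_le_pow_left₀ hinv.le hba k
  constructor
  · have := (abs_le.mp habs).2
    linarith
  · rcases Nat.eq_zero_or_pos k with rfl | hk
    · norm_num
    · have h1 : (1 - u⁻¹)^k ≤ 1 - u⁻¹ := pow_le_of_le_one ha0 ha1 hk.ne'
      have habs2 : |(-u⁻¹)^k| ≤ u⁻¹ := by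
        rw [abs_pow, abs_neg, abs_of_pos hinv]
        exact pow_le_of_le_one hinv.le (by linarith) hk.ne'
      have h2 := (abs_le.mp habs2).1
      linarith

lemma key_id (u A1 B1 A2 B2 : ℝ) (hu : u ≠ 0) :
    u * (((-u⁻¹) * B1) * ((-u⁻¹) * B2))
      + (((1-u⁻¹) * A1) * ((-u⁻¹) * B2) - ((-u⁻¹) * B1) * ((-u⁻¹) * B2))
      + (((-u⁻¹) * B1) * ((1-u⁻¹) * A2) - ((-u⁻¹) * B1) * ((-u⁻¹) * B2))
    = (-u⁻¹) * (((1-u⁻¹) * A1 - (-u⁻¹) * B1) * ((1-u⁻¹) * A2 - (-u⁻¹) * B2))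
      + u * (((1-u⁻¹) * u⁻¹) * (A1 - B1)) * (((1-u⁻¹) * u⁻¹) * (A2 - B2)) := by
  field_simp
  ring

lemma final_bound {u α1 α2 β1 β2 : ℝ} (hu : 2 ≤ u)
    (h1 : 0 ≤ α1) (h1' : α1 ≤ 1) (h2 : 0 ≤ α2) (h2' : α2 ≤ 1)
    (h3 : 0 ≤ β1) (h3' : β1 ≤ 1) (h4 : 0 ≤ β2) (h4' : β2 ≤ 1) :
    |(-u⁻¹) * (α1 * α2) + u * (((1-u⁻¹) * u⁻¹) * β1) * (((1-u⁻¹) * u⁻¹) * β2)| ≤ u⁻¹ := by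
  have hu0 : 0 < u := by linarith
  have hinv : 0 < u⁻¹ := by positivity
  have hinv2 : u⁻¹ ≤ 2⁻¹ := by rw [inv_le_inv₀ hu0 (by norm_num)]; exact hu
  have ha0 : 0 ≤ 1 - u⁻¹ := by linarith
  have hαα : α1 * α2 ≤ 1 := mul_le_one₀ h1' h2 h2'
  have hαα0 : 0 ≤ α1 * α2 := mul_nonneg h1 h2
  have hP0 : 0 ≤ u * (((1-u⁻¹) * u⁻¹) * β1) * (((1-u⁻¹) * u⁻¹) * β2) := by positivity
  have hPe : u * (((1-u⁻¹) * u⁻¹) * β1) * (((1-u⁻¹) * u⁻¹) * β2)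
      = (1-u⁻¹)^2 * u⁻¹ * (β1 * β2) * (u * u⁻¹) := by ring
  have huu : u * u⁻¹ = 1 := mul_inv_cancel₀ hu0.ne'
  have hββ : β1 * β2 ≤ 1 := mul_le_one₀ h3' h4 h4'
  have hββ0 : 0 ≤ β1 * β2 := mul_nonneg h3 h4
  have hP : u * (((1-u⁻¹) * u⁻¹) * β1) * (((1-u⁻¹) * u⁻¹) * β2) ≤ u⁻¹ := by
    rw [hPe, huu, mul_one]
    have hsq : (1-u⁻¹)^2 ≤ 1 := by nlinarith
    have hsq0 : 0 ≤ (1-u⁻¹)^2 := sq_nonneg _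
    have hm : (1-u⁻¹)^2 * (β1 * β2) ≤ 1 :=
      mul_le_one₀ hsq hββ0 hββ
    calc (1-u⁻¹)^2 * u⁻¹ * (β1 * β2) = ((1-u⁻¹)^2 * (β1 * β2)) * u⁻¹ := by ring
      _ ≤ 1 * u⁻¹ := mul_le_mul_of_nonneg_right hm hinv.le
      _ = u⁻¹ := one_mul _
  have hN0 : (-u⁻¹) * (α1 * α2) ≤ 0 := by nlinarith
  have hN : -u⁻¹ ≤ (-u⁻¹) * (α1 * α2) := by nlinarith
  rw [abs_le]
  constructor <;> linarith

lemma factor_bound (m : ℕ) (hm : 2 ≤ m) (q₁ q₂ : ℕ) (hq₁ : 1 ≤ q₁) (hq₂ : 1 ≤ q₂)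
    (t t' : Fin m) :
    |∑ s, (Mmat m t s) ^ q₁ * (Mmat m t' s) ^ q₂| ≤ |Mmat m t t'| := by
  have hu : (2 : ℝ) ≤ (m : ℝ) := by exact_mod_cast hm
  have hu0 : (0 : ℝ) < (m : ℝ) := by linarith
  have hinv : (0 : ℝ) < (m : ℝ)⁻¹ := by positivity
  have hinv2 : (m : ℝ)⁻¹ ≤ 2⁻¹ := by rw [inv_le_inv₀ hu0 (by norm_num)]; exact hu
  have ha0 : (0 : ℝ) ≤ 1 - (m : ℝ)⁻¹ := by linarith
  have ha1 : (1 : ℝ) - (m : ℝ)⁻¹ ≤ 1 := by linarith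
  by_cases htt : t = t'
  · -- diagonal case
    subst htt
    rw [Mmat_apply m t t, if_pos rfl, abs_of_nonneg ha0]
    calc |∑ s, (Mmat m t s) ^ q₁ * (Mmat m t s) ^ q₂|
        ≤ ∑ s, |(Mmat m t s) ^ q₁ * (Mmat m t s) ^ q₂| := Finset.abs_sum_le_sum_abs _ _
      _ ≤ ∑ s, (Mmat m t s) ^ 2 := by
          apply Finset.sum_le_sum
          intro s _
          rw [← pow_add, abs_pow]
          have hle : |Mmat m t s| ≤ 1 := by
            rw [Mmat_apply]; split_ifs
            · rw [abs_of_nonneg ha0]; exact ha1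
            · rw [abs_neg, abs_of_pos hinv]; linarith
          have h2 : 2 ≤ q₁ + q₂ := by omega
          calc |Mmat m t s| ^ (q₁ + q₂) ≤ |Mmat m t s| ^ 2 :=
                pow_le_pow_of_le_one (abs_nonneg _) hle h2
            _ = (Mmat m t s) ^ 2 := sq_abs _
      _ = 1 - (m : ℝ)⁻¹ := by
          simp_rw [Mmat_apply m t]
          have : ∀ s : Fin m, (if t = s then 1 - (m:ℝ)⁻¹ else -(m:ℝ)⁻¹) ^ 2
              = if t = s then (1 - (m:ℝ)⁻¹)^2 else (-(m:ℝ)⁻¹)^2 := by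
            intro s; split_ifs <;> ring
          simp_rw [this, sum_ite_one]
          field_simp
          ring
  · -- off-diagonal case
    rw [Mmat_apply m t t', if_neg htt, abs_neg, abs_of_pos hinv]
    obtain ⟨p₁, rfl⟩ : ∃ p, q₁ = p + 1 := ⟨q₁ - 1, by omega⟩
    obtain ⟨p₂, rfl⟩ : ∃ p, q₂ = p + 1 := ⟨q₂ - 1, by omega⟩
    have hsum : ∑ s, (Mmat m t s) ^ (p₁+1) * (Mmat m t' s) ^ (p₂+1)
        = (m:ℝ) * (((-(m:ℝ)⁻¹) * (-(m:ℝ)⁻¹)^p₁) * ((-(m:ℝ)⁻¹) * (-(m:ℝ)⁻¹)^p₂))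
          + (((1-(m:ℝ)⁻¹) * (1-(m:ℝ)⁻¹)^p₁) * ((-(m:ℝ)⁻¹) * (-(m:ℝ)⁻¹)^p₂)
              - ((-(m:ℝ)⁻¹) * (-(m:ℝ)⁻¹)^p₁) * ((-(m:ℝ)⁻¹) * (-(m:ℝ)⁻¹)^p₂))
          + (((-(m:ℝ)⁻¹) * (-(m:ℝ)⁻¹)^p₁) * ((1-(m:ℝ)⁻¹) * (1-(m:ℝ)⁻¹)^p₂)
              - ((-(m:ℝ)⁻¹) * (-(m:ℝ)⁻¹)^p₁) * ((-(m:ℝ)⁻¹) * (-(m:ℝ)⁻¹)^p₂)) := by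
      have hpt : ∀ s : Fin m, (Mmat m t s) ^ (p₁+1) * (Mmat m t' s) ^ (p₂+1)
          = if t = s then (1-(m:ℝ)⁻¹)^(p₁+1) * (-(m:ℝ)⁻¹)^(p₂+1) else
              if t' = s then (-(m:ℝ)⁻¹)^(p₁+1) * (1-(m:ℝ)⁻¹)^(p₂+1)
              else (-(m:ℝ)⁻¹)^(p₁+1) * (-(m:ℝ)⁻¹)^(p₂+1) := by
        intro s
        rw [Mmat_apply m t s, Mmat_apply m t' s]
        by_cases h1 : t = s
        · subst h1
          rw [if_pos rfl, if_pos rfl, if_neg (fun hh : t' = t => htt hh.symm)]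
        · rw [if_neg h1, if_neg h1]
          split_ifs <;> rfl
      simp_rw [hpt]
      rw [sum_ite_two m htt]
      ring
    rw [hsum, key_id (m:ℝ) ((1-(m:ℝ)⁻¹)^p₁) ((-(m:ℝ)⁻¹)^p₁) ((1-(m:ℝ)⁻¹)^p₂)
      ((-(m:ℝ)⁻¹)^p₂) hu0.ne']
    have e1 : (1-(m:ℝ)⁻¹) * (1-(m:ℝ)⁻¹)^p₁ - (-(m:ℝ)⁻¹) * (-(m:ℝ)⁻¹)^p₁
        = (1-(m:ℝ)⁻¹)^(p₁+1) - (-(m:ℝ)⁻¹)^(p₁+1) := by ring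
    have e2 : (1-(m:ℝ)⁻¹) * (1-(m:ℝ)⁻¹)^p₂ - (-(m:ℝ)⁻¹) * (-(m:ℝ)⁻¹)^p₂
        = (1-(m:ℝ)⁻¹)^(p₂+1) - (-(m:ℝ)⁻¹)^(p₂+1) := by ring
    rw [e1, e2]
    have hα1 := alpha_bounds hu (p₁+1)
    have hα2 := alpha_bounds hu (p₂+1)
    have hβ1 := alpha_bounds hu p₁
    have hβ2 := alpha_bounds hu p₂
    exact final_bound hu hα1.1 hα1.2 hα2.1 hα2.2 hβ1.1 hβ1.2 hβ2.1 hβ2.2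

/-- The two-way within-transformation matrix
`J = (I_T − T⁻¹ι_Tι_T′) ⊗ (I_n − n⁻¹ι_nι_n′)`. -/
noncomputable def twoWayJ (n T : ℕ) : Matrix (Fin T × Fin n) (Fin T × Fin n) ℝ :=
  ((1 : Matrix (Fin T) (Fin T) ℝ) - (T : ℝ)⁻¹ • Matrix.of (fun _ _ => (1 : ℝ))) ⊗ₖ
  ((1 : Matrix (Fin n) (Fin n) ℝ) - (n : ℝ)⁻¹ • Matrix.of (fun _ _ => (1 : ℝ)))

lemma twoWayJ_eq (n T : ℕ) (x y : Fin T × Fin n) :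
    twoWayJ n T x y = Mmat T x.1 y.1 * Mmat n x.2 y.2 := rfl

/-- For the two-way within-transformation matrix `J`, for all integers
`q₁ ≥ 1`, `q₂ ≥ 1` and all indices `i, j`: `|Σ_r (J_ir)^{q₁} (J_jr)^{q₂}| ≤ |J_ij|`. -/
theorem twoWayJ_cross_moment_bound (n T : ℕ) (hn : 2 ≤ n) (hT : 2 ≤ T)
    (J : Matrix (Fin T × Fin n) (Fin T × Fin n) ℝ) (hJ : J = twoWayJ n T)
    (q₁ q₂ : ℕ) (hq₁ : 1 ≤ q₁) (hq₂ : 1 ≤ q₂) (i j : Fin T × Fin n) :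
    |∑ r, (J i r) ^ q₁ * (J j r) ^ q₂| ≤ |J i j| := by
  subst hJ
  obtain ⟨t, a⟩ := i
  obtain ⟨t', a'⟩ := j
  have hfac : ∑ r : Fin T × Fin n, (twoWayJ n T (t,a) r) ^ q₁ * (twoWayJ n T (t',a') r) ^ q₂
      = (∑ s, (Mmat T t s) ^ q₁ * (Mmat T t' s) ^ q₂)
        * (∑ b, (Mmat n a b) ^ q₁ * (Mmat n a' b) ^ q₂) := by
    rw [Finset.sum_mul_sum, Fintype.sum_prod_type]
    apply Finset.sum_congr rfl
    intro s _
    apply Finset.sum_congr rfl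
    intro b _
    rw [twoWayJ_eq, twoWayJ_eq]
    ring
  rw [hfac, abs_mul, twoWayJ_eq, abs_mul]
  exact mul_le_mul (factor_bound T hT q₁ q₂ hq₁ hq₂ t t')
    (factor_bound n hn q₁ q₂ hq₁ hq₂ a a') (abs_nonneg _) (abs_nonneg _)
end

section
/- Let ε = (ε_1,…,ε_N)′ be i.i.d. real random variables with mean 0, variance σ², fourth moment μ₄ and finite eighth moments, and set ε* = Jε with entries ε*_i, π₁ = Σ_r (J_rr)² and π₂ = Σ_r Σ_s (J_rs)⁴. Then E[ (Σ_{i=1}^N (ε*_i)⁴ / π₂)² ] − ( μ₄ − 3σ⁴ + 3σ⁴·π₁/π₂ )² → 0 as nT → ∞ (along any sequence with n ≥ 2, T ≥ 2 and nT → ∞). -/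
open Matrix Finset MeasureTheory ProbabilityTheory Filter
open scoped Kronecker

/-!
Put `Y = Jε` and `S = ∑ᵢ Yᵢ⁴`. Since `J` is symmetric and idempotent, `∑ᵥ J_{iv}² = J_{ii}`, so
the fourth-moment formula for a linear combination of independent centred variables gives
`E S = μ₄π₂ + 3σ⁴(π₁ − π₂)`, and the quantity in question is `Var S / π₂²`.

Expanding `Yᵢ⁴` and `Yₖ⁴` into monomials of degree four in `ε`, two monomials with disjoint
index sets are independent and have zero covariance, while any other pair has covariance at most
`E ε⁸` by AM–GM. Counting the pairs that share an index bounds `|Cov(Yᵢ⁴, Yₖ⁴)|` by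
`16 E ε⁸ ∑ᵥ |J_{iv}| |J_{kv}| (∑ᵥ |J_{iv}|)³ (∑ᵥ |J_{kv}|)³`. The rows and columns of `J` have
absolute sums at most `4`, so `Var S = O(nT)`, whereas `π₂ ≥ nT/256`: the difference is
`O(1/(nT))`.
-/

open scoped ENNReal

section Counting

variable {ι R : Type*} [Fintype ι] [CommSemiring R]

lemma sum_mul_pow_eq_sum_prod (a x : ι → R) (k : ℕ) :
    (∑ v, a v * x v) ^ k = ∑ g : Fin k → ι, (∏ r, a (g r)) * ∏ r, x (g r) := by
  simp only [Fintype.sum_pow, prod_mul_distrib]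

lemma sum_prod_mul_apply (f c : ι → R) {k : ℕ} (r : Fin (k + 1)) :
    ∑ g : Fin (k + 1) → ι, (∏ t, f (g t)) * c (g r) = (∑ v, f v * c v) * (∑ v, f v) ^ k := by
  classical
  set F : Fin (k + 1) → ι → R := fun t v => if t = r then f v * c v else f v
  have hF : ∀ g : Fin (k + 1) → ι, (∏ t, f (g t)) * c (g r) = ∏ t, F t (g t) := by
    intro g
    simp only [F, Fin.prod_univ_succAbove _ r, if_pos, Fin.succAbove_ne, if_false]
    ring
  rw [sum_congr rfl fun g _ => hF g, ← Fintype.prod_sum, Fin.prod_univ_succAbove _ r]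
  simp [F, Fin.succAbove_ne]

lemma sum_sum_prod_mul_prod_ite_eq [DecidableEq ι] (f f' : ι → R) {k : ℕ} (r r' : Fin (k + 1)) :
    ∑ g : Fin (k + 1) → ι, ∑ h : Fin (k + 1) → ι,
        (∏ t, f (g t)) * (∏ t, f' (h t)) * (if g r = h r' then 1 else 0)
      = (∑ v, f v * f' v) * (∑ v, f v) ^ k * (∑ v, f' v) ^ k := by
  have hinner : ∀ g : Fin (k + 1) → ι,
      ∑ h : Fin (k + 1) → ι, (∏ t, f (g t)) * (∏ t, f' (h t)) * (if g r = h r' then 1 else 0)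
        = (∏ t, f (g t)) * f' (g r) * (∑ v, f' v) ^ k := by
    intro g
    have := sum_prod_mul_apply f' (fun v => if g r = v then 1 else 0) r'
    simp only [mul_ite, mul_one, mul_zero, sum_ite_eq, mem_univ, if_true] at this
    rw [mul_assoc, ← this, mul_sum]
    refine sum_congr rfl fun h _ => ?_
    split_ifs <;> ring
  simp only [hinner, ← sum_mul, sum_prod_mul_apply]

end Counting

section MatrixSums

variable {l l' m m' : Type*} [Fintype l'] [Fintype m']

lemma Matrix.sum_map_kronecker_apply {f : ℝ → ℝ} (hf : ∀ x y, f (x * y) = f x * f y)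
    (A : Matrix l l' ℝ) (B : Matrix m m' ℝ) (i : l × m) :
    ∑ v, f ((A ⊗ₖ B) i v) = (∑ j, f (A i.1 j)) * ∑ j, f (B i.2 j) := by
  simp only [Fintype.sum_prod_type, sum_mul_sum, kroneckerMap_apply, hf]

lemma Matrix.sum_sum_map_kronecker_apply [Fintype l] [Fintype m] {f : ℝ → ℝ}
    (hf : ∀ x y, f (x * y) = f x * f y) (A : Matrix l l' ℝ) (B : Matrix m m' ℝ) :
    ∑ i, ∑ v, f ((A ⊗ₖ B) i v) = (∑ i, ∑ j, f (A i j)) * ∑ i, ∑ j, f (B i j) := by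
  simp only [sum_map_kronecker_apply hf, Fintype.sum_prod_type, sum_mul_sum]

lemma Matrix.sum_sum_abs_mul_pow_three_le [Fintype l] (A : Matrix l l' ℝ) {c : ℝ}
    (hrow : ∀ i, ∑ v, |A i v| ≤ c) (hcol : ∀ v, ∑ i, |A i v| ≤ c) :
    ∑ i, ∑ k, (∑ v, |A i v| * |A k v|) * (∑ v, |A i v|) ^ 3 * (∑ v, |A k v|) ^ 3
      ≤ c ^ 8 * Fintype.card l := by
  have hc : ∀ i, 0 ≤ c := fun i => (sum_nonneg fun v _ => abs_nonneg _).trans (hrow i)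
  have hpair : ∀ i, ∑ k, ∑ v, |A i v| * |A k v| ≤ c ^ 2 := fun i =>
    calc ∑ k, ∑ v, |A i v| * |A k v| = ∑ v, |A i v| * ∑ k, |A k v| := by
          rw [sum_comm]; simp only [mul_sum]
      _ ≤ ∑ v, |A i v| * c := sum_le_sum fun v _ => by gcongr; exact hcol v
      _ ≤ c * c := by rw [← sum_mul]; exact mul_le_mul_of_nonneg_right (hrow i) (hc i)
      _ = c ^ 2 := (sq c).symm
  calc _ ≤ ∑ i, ∑ k, (∑ v, |A i v| * |A k v|) * (c ^ 3 * c ^ 3) :=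
        sum_le_sum fun i _ => sum_le_sum fun k _ => by
          rw [mul_assoc]
          exact mul_le_mul_of_nonneg_left
            (mul_le_mul (pow_le_pow_left₀ (by positivity) (hrow i) 3)
              (pow_le_pow_left₀ (by positivity) (hrow k) 3) (by positivity)
              (pow_nonneg (hc i) 3)) (by positivity)
    _ = ∑ i, c ^ 6 * ∑ k, ∑ v, |A i v| * |A k v| :=
        sum_congr rfl fun i _ => by rw [mul_sum]; exact sum_congr rfl fun k _ => by ring
    _ ≤ ∑ _i : l, c ^ 6 * c ^ 2 := sum_le_sum fun i _ => by gcongr; exact hpair i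
    _ = c ^ 8 * Fintype.card l := by
        rw [sum_const, card_univ, nsmul_eq_mul]; ring

end MatrixSums

section Centering

noncomputable def centeringMatrix (k : ℕ) : Matrix (Fin k) (Fin k) ℝ :=
  1 - (k : ℝ)⁻¹ • Matrix.of (fun _ _ => 1)

variable {k : ℕ}

lemma centeringMatrix_apply (i j : Fin k) :
    centeringMatrix k i j = (if i = j then 1 else 0) - (k : ℝ)⁻¹ := by
  simp [centeringMatrix, one_apply]

lemma centeringMatrix_transpose : (centeringMatrix k)ᵀ = centeringMatrix k := by
  ext i j
  simp only [transpose_apply, centeringMatrix_apply, eq_comm]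

lemma sum_map_centeringMatrix_apply (f : ℝ → ℝ) (i : Fin k) :
    ∑ j, f (centeringMatrix k i j) = f (1 - (k : ℝ)⁻¹) + ((k : ℝ) - 1) * f (-(k : ℝ)⁻¹) := by
  have hk : 1 ≤ k := Nat.one_le_of_lt i.isLt
  rw [← add_sum_erase _ _ (mem_univ i), sum_congr rfl fun j hj => by
    rw [centeringMatrix_apply, if_neg (ne_of_mem_erase hj).symm, zero_sub]]
  simp [centeringMatrix_apply, card_erase_of_mem, Nat.cast_sub hk]

lemma sum_abs_centeringMatrix_apply_le (i : Fin k) : ∑ j, |centeringMatrix k i j| ≤ 2 := by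
  have hk : (1 : ℝ) ≤ k := by exact_mod_cast Nat.one_le_of_lt i.isLt
  have hk₀ : (0 : ℝ) < k := zero_lt_one.trans_le hk
  rw [sum_map_centeringMatrix_apply, abs_neg, abs_of_pos (inv_pos.mpr hk₀),
    abs_of_nonneg (sub_nonneg.mpr (inv_le_one_of_one_le₀ hk))]
  have : (k : ℝ) * (k : ℝ)⁻¹ = 1 := mul_inv_cancel₀ hk₀.ne'
  nlinarith [inv_pos.mpr hk₀]

lemma sum_sq_centeringMatrix_apply (i : Fin k) :
    ∑ j, centeringMatrix k i j ^ 2 = centeringMatrix k i i := by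
  have hk : (k : ℝ) ≠ 0 := by exact_mod_cast (Nat.pos_of_ne_zero (Fin.pos i).ne').ne'
  refine (sum_map_centeringMatrix_apply (· ^ 2) i).trans ?_
  rw [centeringMatrix_apply, if_pos rfl]
  field_simp
  ring

lemma le_sum_sum_centeringMatrix_pow_four (hk : 2 ≤ k) :
    (k : ℝ) / 16 ≤ ∑ i, ∑ j, centeringMatrix k i j ^ 4 := by
  have hdiag : ∀ i : Fin k, 1 / 16 ≤ ∑ j, centeringMatrix k i j ^ 4 := by
    intro i
    have hk' : (k : ℝ)⁻¹ ≤ 1 / 2 := by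
      rw [one_div]; exact inv_anti₀ two_pos (by exact_mod_cast hk)
    calc (1 : ℝ) / 16 = (1 / 2) ^ 4 := by norm_num
      _ ≤ centeringMatrix k i i ^ 4 := by
        rw [centeringMatrix_apply, if_pos rfl]
        exact pow_le_pow_left₀ (by norm_num) (by linarith) 4
      _ ≤ ∑ j, centeringMatrix k i j ^ 4 :=
        single_le_sum (f := fun j => centeringMatrix k i j ^ 4) (fun j _ => by positivity)
          (mem_univ i)
  calc (k : ℝ) / 16 = ∑ _i : Fin k, (1 : ℝ) / 16 := by
        rw [sum_const, card_univ, Fintype.card_fin, nsmul_eq_mul]; ring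
    _ ≤ _ := sum_le_sum fun i _ => hdiag i

end Centering

section TwoWay

variable {n T : ℕ}

lemma twoWayJ_eq_kronecker : twoWayJ n T = centeringMatrix T ⊗ₖ centeringMatrix n := rfl

lemma twoWayJ_transpose : (twoWayJ n T)ᵀ = twoWayJ n T := by
  rw [twoWayJ_eq_kronecker, ← kroneckerMap_transpose, centeringMatrix_transpose,
    centeringMatrix_transpose]

lemma sum_abs_twoWayJ_row_le (r : Fin T × Fin n) : ∑ v, |twoWayJ n T r v| ≤ 4 := by
  rw [twoWayJ_eq_kronecker, sum_map_kronecker_apply abs_mul]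
  calc _ ≤ (2 : ℝ) * 2 := mul_le_mul (sum_abs_centeringMatrix_apply_le _)
        (sum_abs_centeringMatrix_apply_le _) (by positivity) zero_le_two
    _ = 4 := by norm_num

lemma sum_abs_twoWayJ_col_le (v : Fin T × Fin n) : ∑ r, |twoWayJ n T r v| ≤ 4 := by
  simpa only [← transpose_apply (twoWayJ n T) v, twoWayJ_transpose] using
    sum_abs_twoWayJ_row_le v

lemma sum_sq_twoWayJ_apply (r : Fin T × Fin n) : ∑ v, twoWayJ n T r v ^ 2 = twoWayJ n T r r := by
  rw [twoWayJ_eq_kronecker]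
  refine (sum_map_kronecker_apply (f := (· ^ 2)) (fun x y => mul_pow x y 2) _ _ r).trans ?_
  rw [sum_sq_centeringMatrix_apply, sum_sq_centeringMatrix_apply]
  rfl

lemma le_sum_sum_twoWayJ_pow_four (hn : 2 ≤ n) (hT : 2 ≤ T) :
    (n * T : ℝ) / 256 ≤ ∑ r, ∑ v, twoWayJ n T r v ^ 4 := by
  rw [twoWayJ_eq_kronecker]
  refine le_of_le_of_eq ?_
    (sum_sum_map_kronecker_apply (f := (· ^ 4)) (fun x y => mul_pow x y 4) _ _).symm
  calc (n * T : ℝ) / 256 = (T / 16) * (n / 16) := by ring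
    _ ≤ _ := mul_le_mul (le_sum_sum_centeringMatrix_pow_four hT)
        (le_sum_sum_centeringMatrix_pow_four hn) (by positivity)
        (sum_nonneg fun _ _ => sum_nonneg fun _ _ => by positivity)

end TwoWay

section Moments

variable {Ω ι : Type*} [MeasurableSpace Ω] {μ : Measure Ω} {Z : ι → Ω → ℝ}

lemma memLp_of_integrable_pow {f : Ω → ℝ} {p : ℕ} (hp : Even p) (hp₀ : p ≠ 0)
    (hf : AEStronglyMeasurable f μ) (hint : Integrable (fun ω => f ω ^ p) μ) :
    MemLp f p μ := by
  refine (integrable_norm_rpow_iff hf (by exact_mod_cast hp₀) (by simp)).mp ?_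
  simpa [Real.norm_eq_abs, hp.pow_abs] using hint

lemma integral_finsetSum_eq_zero (hZ : ∀ i, Integrable (Z i) μ) (h0 : ∀ i, ∫ ω, Z i ω ∂μ = 0)
    (s : Finset ι) : ∫ ω, ∑ i ∈ s, Z i ω ∂μ = 0 := by
  rw [integral_finsetSum s fun i _ => hZ i]
  exact sum_eq_zero fun i _ => h0 i

lemma MeasureTheory.MemLp.integrable_pow [IsFiniteMeasure μ] {f : Ω → ℝ} {p : ℝ≥0∞} {j : ℕ}
    (hf : MemLp f p μ) (hj : (j : ℝ≥0∞) ≤ p) : Integrable (fun ω => f ω ^ j) μ := by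
  refine ((hf.mono_exponent hj).integrable_norm_pow').mono'
    (hf.aestronglyMeasurable.pow j) (ae_of_all _ fun ω => ?_)
  simp

lemma ProbabilityTheory.IndepFun.integral_add_pow [IsFiniteMeasure μ] {U V : Ω → ℝ} {n : ℕ}
    (h : IndepFun U V μ) (hU : MemLp U n μ) (hV : MemLp V n μ) :
    ∫ ω, (U ω + V ω) ^ n ∂μ
      = ∑ j ∈ range (n + 1), (∫ ω, U ω ^ j ∂μ) * (∫ ω, V ω ^ (n - j) ∂μ) * n.choose j := by
  have hind : ∀ j k : ℕ, IndepFun (fun ω => U ω ^ j) (fun ω => V ω ^ k) μ := fun j k =>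
    h.comp (measurable_id.pow_const j) (measurable_id.pow_const k)
  simp_rw [add_pow]
  rw [integral_finsetSum _ fun j hj => ?_]
  · refine sum_congr rfl fun j hj => ?_
    rw [integral_mul_const, (hind j (n - j)).integral_fun_mul_eq_mul_integral
      (hU.aestronglyMeasurable.pow j) (hV.aestronglyMeasurable.pow (n - j))]
  · exact ((hind j (n - j)).integrable_mul
      (hU.integrable_pow (by exact_mod_cast mem_range_succ_iff.mp hj))
      (hV.integrable_pow (by exact_mod_cast Nat.sub_le n j))).mul_const _

lemma ProbabilityTheory.iIndepFun.integral_sum_sq [IsProbabilityMeasure μ] (hZ : iIndepFun Z μ)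
    (hL : ∀ i, MemLp (Z i) 2 μ) (h0 : ∀ i, ∫ ω, Z i ω ∂μ = 0) (s : Finset ι) :
    ∫ ω, (∑ i ∈ s, Z i ω) ^ 2 ∂μ = ∑ i ∈ s, ∫ ω, Z i ω ^ 2 ∂μ := by
  classical
  induction s using Finset.induction_on with
  | empty => simp
  | insert w s hw ih =>
    have hUV : IndepFun (fun ω => ∑ i ∈ s, Z i ω) (Z w) μ := by
      simpa only [Finset.sum_fn] using
        hZ.indepFun_finsetSum_of_notMem₀ (fun i => (hL i).aemeasurable) hw
    simp_rw [sum_insert hw, add_comm (Z w _)]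
    rw [hUV.integral_add_pow (memLp_finsetSum s fun i _ => hL i) (hL w)]
    simp [sum_range_succ, ih, h0,
      integral_finsetSum_eq_zero (fun i => (hL i).integrable one_le_two) h0]

lemma ProbabilityTheory.iIndepFun.integral_sum_pow_four [IsProbabilityMeasure μ]
    (hZ : iIndepFun Z μ) (hL : ∀ i, MemLp (Z i) 4 μ) (h0 : ∀ i, ∫ ω, Z i ω ∂μ = 0) (s : Finset ι) :
    ∫ ω, (∑ i ∈ s, Z i ω) ^ 4 ∂μ = ∑ i ∈ s, ∫ ω, Z i ω ^ 4 ∂μ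
      + 3 * ((∑ i ∈ s, ∫ ω, Z i ω ^ 2 ∂μ) ^ 2 - ∑ i ∈ s, (∫ ω, Z i ω ^ 2 ∂μ) ^ 2) := by
  classical
  have hL2 : ∀ i, MemLp (Z i) 2 μ := fun i => (hL i).mono_exponent (by norm_num)
  induction s using Finset.induction_on with
  | empty => simp
  | insert w s hw ih =>
    have hUV : IndepFun (fun ω => ∑ i ∈ s, Z i ω) (Z w) μ := by
      simpa only [Finset.sum_fn] using
        hZ.indepFun_finsetSum_of_notMem₀ (fun i => (hL i).aemeasurable) hw
    simp_rw [sum_insert hw, add_comm (Z w _)]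
    rw [hUV.integral_add_pow (memLp_finsetSum s fun i _ => hL i) (hL w)]
    simp only [Nat.reduceAdd, sum_range_succ, range_one, sum_singleton, pow_zero, integral_const,
      probReal_univ, smul_eq_mul, mul_one, tsub_zero, one_mul, Nat.choose, Nat.cast_one, pow_one,
      h0, integral_finsetSum_eq_zero (fun i => (hL i).integrable (by norm_num)) h0,
      Nat.add_one_sub_one, zero_mul, add_zero, Nat.cast_ofNat, hZ.integral_sum_sq hL2 h0,
      Nat.reduceSub, mul_zero, ih, tsub_self]
    ring

lemma integral_sum_mul_pow_four [IsProbabilityMeasure μ] [Fintype ι]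
    {X : ι → Ω → ℝ} {σ2 μ4 : ℝ} (hXi : iIndepFun X μ) (hX : ∀ i, MemLp (X i) 4 μ)
    (h0 : ∀ i, ∫ ω, X i ω ∂μ = 0) (h2 : ∀ i, ∫ ω, X i ω ^ 2 ∂μ = σ2)
    (h4 : ∀ i, ∫ ω, X i ω ^ 4 ∂μ = μ4) (a : ι → ℝ) :
    ∫ ω, (∑ v, a v * X v ω) ^ 4 ∂μ
      = μ4 * ∑ v, a v ^ 4 + 3 * σ2 ^ 2 * ((∑ v, a v ^ 2) ^ 2 - ∑ v, a v ^ 4) := by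
  have hZ : iIndepFun (fun v ω => a v * X v ω) μ :=
    hXi.comp (fun v x => a v * x) fun v => measurable_const_mul (a v)
  rw [hZ.integral_sum_pow_four (fun v => (hX v).const_mul _)
    (fun v => by simp [integral_const_mul, h0]) univ]
  simp only [mul_pow, integral_const_mul, h2, h4, ← sum_mul, ← pow_mul, Nat.reduceMul]
  ring

end Moments

section Covariance

variable {Ω ι : Type*} [MeasurableSpace Ω] {μ : Measure Ω} {X : ι → Ω → ℝ} {M : ℝ}

lemma abs_covariance_le_half_add_variance [IsFiniteMeasure μ] {U V : Ω → ℝ} (hU : MemLp U 2 μ)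
    (hV : MemLp V 2 μ) :
    |cov[U, V; μ]| ≤ (Var[U; μ] + Var[V; μ]) / 2 := by
  have hadd := variance_nonneg (U + V) μ
  have hsub := variance_nonneg (U - V) μ
  rw [variance_add hU hV] at hadd
  rw [variance_sub hU hV] at hsub
  exact abs_le.mpr ⟨by linarith, by linarith⟩

lemma sq_prod_four_le_sum_pow_eight (x : Fin 4 → ℝ) : (∏ r, x r) ^ 2 ≤ (∑ r, x r ^ 8) / 4 := by
  simp only [Fin.prod_univ_four, Fin.sum_univ_four]
  nlinarith [sq_nonneg (x 0 ^ 4 - x 1 ^ 4), sq_nonneg (x 2 ^ 4 - x 3 ^ 4),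
    sq_nonneg (x 0 ^ 2 * x 1 ^ 2 - x 2 ^ 2 * x 3 ^ 2)]

lemma memLp_two_prod_four (hX : ∀ i, MemLp (X i) 8 μ) (g : Fin 4 → ι) :
    MemLp (fun ω => ∏ r, X (g r) ω) 2 μ := by
  convert MemLp.prod' (s := univ) fun r _ => hX (g r)
  simp only [sum_const, card_univ, Fintype.card_fin, nsmul_eq_mul, Nat.cast_ofNat]
  rw [ENNReal.mul_inv (by simp) (by simp), inv_inv, show (8 : ℝ≥0∞) = 4 * 2 by norm_num,
    ← mul_assoc, ENNReal.inv_mul_cancel (by simp) (by simp), one_mul]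

lemma memLp_sum_mul_pow_four [Fintype ι] (hX : ∀ i, MemLp (X i) 8 μ) (a : ι → ℝ) :
    MemLp (fun ω => (∑ v, a v * X v ω) ^ 4) 2 μ := by
  simp_rw [sum_mul_pow_eq_sum_prod]
  exact memLp_finsetSum _ fun g _ => (memLp_two_prod_four hX g).const_mul _

lemma integral_sq_prod_four_le [IsFiniteMeasure μ] (hX : ∀ i, MemLp (X i) 8 μ)
    (hM : ∀ i, ∫ ω, X i ω ^ 8 ∂μ ≤ M) (g : Fin 4 → ι) : ∫ ω, (∏ r, X (g r) ω) ^ 2 ∂μ ≤ M := by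
  have h8 : ∀ i, Integrable (fun ω => X i ω ^ 8) μ := fun i => (hX i).integrable_pow le_rfl
  calc ∫ ω, (∏ r, X (g r) ω) ^ 2 ∂μ ≤ ∫ ω, (∑ r, X (g r) ω ^ 8) / 4 ∂μ :=
        integral_mono (memLp_two_prod_four hX g).integrable_sq
          ((integrable_finsetSum _ fun r _ => h8 (g r)).div_const 4)
          fun ω => sq_prod_four_le_sum_pow_eight _
    _ = (∑ r, ∫ ω, X (g r) ω ^ 8 ∂μ) / 4 := by
        rw [integral_div, integral_finsetSum _ fun r _ => h8 (g r)]
    _ ≤ (∑ _r : Fin 4, M) / 4 := by gcongr with r; exact hM (g r)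
    _ = M := by simp

lemma abs_covariance_prod_four_le [IsProbabilityMeasure μ] (hX : ∀ i, MemLp (X i) 8 μ)
    (hM : ∀ i, ∫ ω, X i ω ^ 8 ∂μ ≤ M) (g h : Fin 4 → ι) :
    |cov[fun ω => ∏ r, X (g r) ω, fun ω => ∏ r, X (h r) ω; μ]| ≤ M := by
  have hvar : ∀ g : Fin 4 → ι, Var[fun ω => ∏ r, X (g r) ω; μ] ≤ M := fun g =>
    (variance_le_expectation_sq (memLp_two_prod_four hX g).aestronglyMeasurable).trans
      (by simpa using integral_sq_prod_four_le hX hM g)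
  linarith [abs_covariance_le_half_add_variance (memLp_two_prod_four hX g)
    (memLp_two_prod_four hX h), hvar g, hvar h]

lemma covariance_prod_four_eq_zero [DecidableEq ι] (hXi : iIndepFun X μ)
    (hX : ∀ i, MemLp (X i) 8 μ) {g h : Fin 4 → ι}
    (hgh : Disjoint (univ.image g) (univ.image h)) :
    cov[fun ω => ∏ r, X (g r) ω, fun ω => ∏ r, X (h r) ω; μ] = 0 := by
  have hind := (hXi.indepFun_finset₀ _ _ hgh fun i => (hX i).aemeasurable).comp
    (φ := fun y => ∏ r, y ⟨g r, mem_image_of_mem g (mem_univ r)⟩)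
    (ψ := fun y => ∏ r, y ⟨h r, mem_image_of_mem h (mem_univ r)⟩) (by fun_prop) (by fun_prop)
  exact hind.covariance_eq_zero (memLp_two_prod_four hX g) (memLp_two_prod_four hX h)

lemma abs_covariance_prod_four_le_sum_ite [IsProbabilityMeasure μ] [DecidableEq ι]
    (hXi : iIndepFun X μ) (hX : ∀ i, MemLp (X i) 8 μ) (hM : ∀ i, ∫ ω, X i ω ^ 8 ∂μ ≤ M)
    (g h : Fin 4 → ι) :
    |cov[fun ω => ∏ r, X (g r) ω, fun ω => ∏ r, X (h r) ω; μ]|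
      ≤ M * ∑ r, ∑ r', if g r = h r' then 1 else 0 := by
  by_cases hgh : ∃ r r', g r = h r'
  · obtain ⟨r, r', he⟩ := hgh
    have hle := abs_covariance_prod_four_le hX hM g h
    have hone : (1 : ℝ) ≤ ∑ r, ∑ r', if g r = h r' then 1 else 0 :=
      calc (1 : ℝ) = if g r = h r' then 1 else 0 := (if_pos he).symm
        _ ≤ ∑ r', if g r = h r' then 1 else 0 :=
          single_le_sum (f := fun r' => if g r = h r' then (1 : ℝ) else 0)
            (fun _ _ => by positivity) (mem_univ r')
        _ ≤ _ := single_le_sum (f := fun r => ∑ r', if g r = h r' then (1 : ℝ) else 0)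
            (fun _ _ => by positivity) (mem_univ r)
    exact hle.trans (le_mul_of_one_le_right ((abs_nonneg _).trans hle) hone)
  · simp only [not_exists] at hgh
    rw [covariance_prod_four_eq_zero hXi hX]
    · simp [hgh]
    · simpa [disjoint_left] using fun r r' he => hgh r r' he.symm

lemma abs_covariance_sum_mul_pow_four_le [IsProbabilityMeasure μ] [Fintype ι]
    (hXi : iIndepFun X μ) (hX : ∀ i, MemLp (X i) 8 μ) (hM : ∀ i, ∫ ω, X i ω ^ 8 ∂μ ≤ M)
    (a b : ι → ℝ) :
    |cov[fun ω => (∑ v, a v * X v ω) ^ 4, fun ω => (∑ v, b v * X v ω) ^ 4; μ]|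
      ≤ 16 * M * ((∑ v, |a v| * |b v|) * (∑ v, |a v|) ^ 3 * (∑ v, |b v|) ^ 3) := by
  classical
  have hterm : ∀ (c : ι → ℝ) (g : Fin 4 → ι),
      MemLp (fun ω => (∏ r, c (g r)) * ∏ r, X (g r) ω) 2 μ := fun c g =>
    (memLp_two_prod_four hX g).const_mul _
  simp_rw [sum_mul_pow_eq_sum_prod]
  rw [covariance_fun_sum_fun_sum (hterm a) (hterm b)]
  simp_rw [covariance_const_mul_left, covariance_const_mul_right]
  calc _ ≤ ∑ g : Fin 4 → ι, ∑ h : Fin 4 → ι,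
          M * ((∏ t, |a (g t)|) * (∏ t, |b (h t)|) * ∑ r, ∑ r', if g r = h r' then 1 else 0) := by
        refine (abs_sum_le_sum_abs _ _).trans (sum_le_sum fun g _ =>
          (abs_sum_le_sum_abs _ _).trans (sum_le_sum fun h _ => ?_))
        rw [abs_mul, abs_mul, abs_prod, abs_prod, ← mul_assoc, mul_left_comm]
        gcongr
        exact abs_covariance_prod_four_le_sum_ite hXi hX hM g h
    _ = M * ∑ r : Fin 4, ∑ r' : Fin 4, ∑ g : Fin 4 → ι, ∑ h : Fin 4 → ι,
          (∏ t, |a (g t)|) * (∏ t, |b (h t)|) * (if g r = h r' then 1 else 0) := by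
        simp only [mul_sum]
        exact (sum_congr rfl fun _ _ => sum_comm).trans (sum_comm.trans (sum_congr rfl fun _ _ =>
          (sum_congr rfl fun _ _ => sum_comm).trans sum_comm))
    _ = M * ∑ _r : Fin 4, ∑ _r' : Fin 4,
          (∑ v, |a v| * |b v|) * (∑ v, |a v|) ^ 3 * (∑ v, |b v|) ^ 3 := by
        congr 1
        exact sum_congr rfl fun r _ => sum_congr rfl fun r' _ =>
          sum_sum_prod_mul_prod_ite_eq (fun v => |a v|) (fun v => |b v|) r r'
    _ = 16 * M * ((∑ v, |a v| * |b v|) * (∑ v, |a v|) ^ 3 * (∑ v, |b v|) ^ 3) := by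
        simp only [sum_const, card_univ, Fintype.card_fin, nsmul_eq_mul]
        ring

end Covariance

section Panel

variable {Ω : Type*} [MeasurableSpace Ω] {μ : Measure Ω}

lemma variance_sum_mulVec_pow_four_le [IsProbabilityMeasure μ] {ι κ : Type*} [Fintype ι]
    [Fintype κ] {X : ι → Ω → ℝ} {M : ℝ} (hXi : iIndepFun X μ)
    (hX : ∀ i, MemLp (X i) 8 μ) (hM : ∀ i, ∫ ω, X i ω ^ 8 ∂μ ≤ M) (hM₀ : 0 ≤ M)
    (A : Matrix κ ι ℝ) {c : ℝ} (hrow : ∀ i, ∑ v, |A i v| ≤ c) (hcol : ∀ v, ∑ i, |A i v| ≤ c) :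
    Var[fun ω => ∑ i, (A *ᵥ fun v => X v ω) i ^ 4; μ] ≤ 16 * M * (c ^ 8 * Fintype.card κ) := by
  simp only [mulVec, dotProduct]
  rw [variance_fun_sum fun i => memLp_sum_mul_pow_four hX (A i)]
  calc _ ≤ ∑ i, ∑ k, 16 * M
          * ((∑ v, |A i v| * |A k v|) * (∑ v, |A i v|) ^ 3 * (∑ v, |A k v|) ^ 3) :=
        sum_le_sum fun i _ => sum_le_sum fun k _ =>
          (le_abs_self _).trans (abs_covariance_sum_mul_pow_four_le hXi hX hM (A i) (A k))
    _ = 16 * M * ∑ i, ∑ k,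
          (∑ v, |A i v| * |A k v|) * (∑ v, |A i v|) ^ 3 * (∑ v, |A k v|) ^ 3 := by
        simp only [mul_sum]
    _ ≤ _ := by gcongr; exact A.sum_sum_abs_mul_pow_three_le hrow hcol

theorem abs_integral_sq_sum_pow_four_div_sub_le [IsProbabilityMeasure μ] {n T : ℕ}
    (hn : 2 ≤ n) (hT : 2 ≤ T) {ε : Fin T × Fin n → Ω → ℝ} (hε : iIndepFun ε μ)
    (hε8 : ∀ i, MemLp (ε i) 8 μ) {σ2 μ4 μ8 : ℝ} (h0 : ∀ i, ∫ ω, ε i ω ∂μ = 0)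
    (h2 : ∀ i, ∫ ω, ε i ω ^ 2 ∂μ = σ2) (h4 : ∀ i, ∫ ω, ε i ω ^ 4 ∂μ = μ4)
    (h8 : ∀ i, ∫ ω, ε i ω ^ 8 ∂μ ≤ μ8) {π₁ π₂ : ℝ} (hπ₁ : π₁ = ∑ r, twoWayJ n T r r ^ 2)
    (hπ₂ : π₂ = ∑ r, ∑ s, twoWayJ n T r s ^ 4) :
    |∫ ω, ((∑ i, (twoWayJ n T *ᵥ fun j => ε j ω) i ^ 4) / π₂) ^ 2 ∂μ
        - (μ4 - 3 * σ2 ^ 2 + 3 * σ2 ^ 2 * (π₁ / π₂)) ^ 2| ≤ 2 ^ 36 * μ8 / (n * T) := by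
  set S : Ω → ℝ := fun ω => ∑ i, (twoWayJ n T *ᵥ fun j => ε j ω) i ^ 4
  have hS4 : ∀ i, MemLp (fun ω => (twoWayJ n T *ᵥ fun j => ε j ω) i ^ 4) 2 μ := fun i => by
    simpa only [mulVec, dotProduct] using memLp_sum_mul_pow_four hε8 (twoWayJ n T i)
  have hSL : MemLp S 2 μ := memLp_finsetSum _ fun i _ => hS4 i
  have hN : (0 : ℝ) < n * T := by
    have : 0 < n * T := Nat.mul_pos (by omega) (by omega)
    exact_mod_cast this
  have hπ₂N : (n * T : ℝ) / 256 ≤ π₂ := hπ₂ ▸ le_sum_sum_twoWayJ_pow_four hn hT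
  have hπ₂₀ : 0 < π₂ := lt_of_lt_of_le (by positivity) hπ₂N
  have hμ8 : 0 ≤ μ8 :=
    (integral_nonneg fun ω => by positivity).trans (h8 (⟨0, by omega⟩, ⟨0, by omega⟩))
  have hES : ∫ ω, S ω ∂μ = μ4 * π₂ + 3 * σ2 ^ 2 * (π₁ - π₂) := by
    rw [integral_finsetSum _ fun i _ => (hS4 i).integrable one_le_two]
    simp only [mulVec, dotProduct, integral_sum_mul_pow_four hε
      (fun i => (hε8 i).mono_exponent (by norm_num)) h0 h2 h4, sum_sq_twoWayJ_apply, hπ₁, hπ₂,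
      sum_add_distrib, sum_sub_distrib, ← mul_sum]
  have hdiff : ∫ ω, (S ω / π₂) ^ 2 ∂μ - (μ4 - 3 * σ2 ^ 2 + 3 * σ2 ^ 2 * (π₁ / π₂)) ^ 2
      = Var[S; μ] / π₂ ^ 2 := by
    have hmean : μ4 - 3 * σ2 ^ 2 + 3 * σ2 ^ 2 * (π₁ / π₂) = (∫ ω, S ω ∂μ) / π₂ := by
      rw [hES]; field_simp; ring
    rw [hmean, variance_eq_sub hSL]
    simp only [div_pow, integral_div, Pi.pow_apply]
    exact (sub_div _ _ _).symm
  have hVar := variance_sum_mulVec_pow_four_le hε hε8 h8 hμ8 (twoWayJ n T)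
    sum_abs_twoWayJ_row_le sum_abs_twoWayJ_col_le
  simp only [Fintype.card_prod, Fintype.card_fin, Nat.cast_mul] at hVar
  rw [hdiff, abs_of_nonneg (div_nonneg (variance_nonneg _ _) (sq_nonneg _))]
  -- `2 ^ 36 = 16 · 4 ^ 8 · 256 ^ 2`
  calc Var[S; μ] / π₂ ^ 2 ≤ 16 * μ8 * (4 ^ 8 * (T * n)) / ((n * T) / 256) ^ 2 :=
        div_le_div₀ (by positivity) hVar (by positivity) (pow_le_pow_left₀ (by positivity) hπ₂N 2)
    _ = 2 ^ 36 * μ8 / (n * T) := by field_simp; ring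

end Panel

theorem second_moment_fourth_powers_limit_general {Ω : Type*} [MeasureSpace Ω]
    [IsProbabilityMeasure (ℙ : Measure Ω)]
    (n T : ℕ → ℕ) (hn : ∀ m, 2 ≤ n m) (hT : ∀ m, 2 ≤ T m)
    (hNT : Tendsto (fun m => n m * T m) atTop atTop)
    (J : (m : ℕ) → Matrix (Fin (T m) × Fin (n m)) (Fin (T m) × Fin (n m)) ℝ)
    (hJ : ∀ m, J m = twoWayJ (n m) (T m))
    (π₁ π₂ : ℕ → ℝ)
    (hπ₁ : ∀ m, π₁ m = ∑ r, (J m r r) ^ 2) (hπ₂ : ∀ m, π₂ m = ∑ r, ∑ s, (J m r s) ^ 4)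
    (ε : (m : ℕ) → (Fin (T m) × Fin (n m)) → Ω → ℝ)
    (hmeas : ∀ m i, Measurable (ε m i))
    (hindep : ∀ m,
      iIndepFun (m := fun _ : Fin (T m) × Fin (n m) => (inferInstance : MeasurableSpace ℝ)) (ε m) ℙ)
    (σ2 μ4 μ8 : ℝ)
    (hmean : ∀ m i, ∫ ω, ε m i ω = 0)
    (hvar : ∀ m i, ∫ ω, (ε m i ω) ^ 2 = σ2)
    (hm4 : ∀ m i, ∫ ω, (ε m i ω) ^ 4 = μ4)
    (hm8 : ∀ m i, ∫ ω, (ε m i ω) ^ 8 = μ8)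
    (hint8 : ∀ m i, Integrable (fun ω => (ε m i ω) ^ 8) ℙ) :
    Tendsto (fun m =>
        (∫ ω, ((∑ i, ((J m).mulVec (fun j => ε m j ω) i) ^ 4) / π₂ m) ^ 2)
          - (μ4 - 3 * σ2 ^ 2 + 3 * σ2 ^ 2 * (π₁ m / π₂ m)) ^ 2)
      atTop (nhds 0) := by
  obtain rfl : J = fun m => twoWayJ (n m) (T m) := funext hJ
  refine squeeze_zero_norm (a := fun m => 2 ^ 36 * μ8 / ((n m * T m : ℕ) : ℝ)) (fun m => ?_)
    (tendsto_const_nhds.div_atTop (tendsto_natCast_atTop_atTop.comp hNT))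
  rw [Real.norm_eq_abs, Nat.cast_mul]
  exact abs_integral_sq_sum_pow_four_div_sub_le (hn m) (hT m) (hindep m)
    (fun i => memLp_of_integrable_pow (by decide) (by norm_num)
      (hmeas m i).aestronglyMeasurable (hint8 m i))
    (hmean m) (hvar m) (hm4 m) (fun i => (hm8 m i).le) (hπ₁ m) (hπ₂ m)

/-- Along any sequence of panel dimensions `(n_m, T_m)` with `n_m ≥ 2`,
`T_m ≥ 2` and `n_m T_m → ∞`, if `ε` are i.i.d. with mean `0`, variance `σ²`, fourth moment
`μ₄` and finite eighth moment, `ε* = Jε`, `π₁ = Σ_r (J_rr)²` and `π₂ = Σ_r Σ_s (J_rs)⁴`,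
then `E[(Σ_i (ε*_i)⁴/π₂)²] − (μ₄ − 3σ⁴ + 3σ⁴π₁/π₂)² → 0`. -/
theorem second_moment_fourth_powers_limit {Ω : Type*} [MeasureSpace Ω]
    [IsProbabilityMeasure (ℙ : Measure Ω)]
    (n T : ℕ → ℕ) (hn : ∀ m, 2 ≤ n m) (hT : ∀ m, 2 ≤ T m)
    (hNT : Tendsto (fun m => n m * T m) atTop atTop)
    (J : (m : ℕ) → Matrix (Fin (T m) × Fin (n m)) (Fin (T m) × Fin (n m)) ℝ)
    (hJ : ∀ m, J m = twoWayJ (n m) (T m))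
    (π₁ π₂ : ℕ → ℝ)
    (hπ₁ : ∀ m, π₁ m = ∑ r, (J m r r) ^ 2) (hπ₂ : ∀ m, π₂ m = ∑ r, ∑ s, (J m r s) ^ 4)
    (ε : (m : ℕ) → (Fin (T m) × Fin (n m)) → Ω → ℝ)
    (hmeas : ∀ m i, Measurable (ε m i))
    (hindep : ∀ m,
      iIndepFun (m := fun _ : Fin (T m) × Fin (n m) => (inferInstance : MeasurableSpace ℝ)) (ε m) ℙ)
    (ν : Measure ℝ)
    (hident : ∀ m i, Measure.map (ε m i) ℙ = ν)
    (σ2 μ4 μ8 : ℝ)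
    (hmean : ∀ m i, ∫ ω, ε m i ω = 0)
    (hvar : ∀ m i, ∫ ω, (ε m i ω) ^ 2 = σ2)
    (hm4 : ∀ m i, ∫ ω, (ε m i ω) ^ 4 = μ4)
    (hm8 : ∀ m i, ∫ ω, (ε m i ω) ^ 8 = μ8)
    (hint8 : ∀ m i, Integrable (fun ω => (ε m i ω) ^ 8) ℙ) :
    Tendsto (fun m =>
        (∫ ω, ((∑ i, ((J m).mulVec (fun j => ε m j ω) i) ^ 4) / π₂ m) ^ 2)
          - (μ4 - 3 * σ2 ^ 2 + 3 * σ2 ^ 2 * (π₁ m / π₂ m)) ^ 2)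
      atTop (nhds 0) :=
  second_moment_fourth_powers_limit_general n T hn hT hNT J hJ π₁ π₂ hπ₁ hπ₂ ε hmeas hindep σ2 μ4 μ8
    hmean hvar hm4 hm8 hint8
end

section
/- Define the N×N real matrix M = (N*/N − 1)·I_N + T⁻¹·(ι_Tι_T′)⊗I_n + n⁻¹·I_T⊗(ι_nι_n′) − N⁻¹·(ι_Tι_T′)⊗(ι_nι_n′). Then M is symmetric, every diagonal entry of M is zero, and tr(M²) = n + T − n/T − T/n + 2/T + 2/n − 1/N − 3. -/
open Matrix Finset
open scoped Kronecker

lemma sum_delta {m : ℕ} (hm : 1 ≤ m) (i : Fin m) (f : ℝ → ℝ) :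
    ∑ j : Fin m, f (if i = j then (1:ℝ) else 0) = f 1 + ((m:ℝ) - 1) * f 0 := by
  classical
  rw [← Finset.add_sum_erase _ _ (Finset.mem_univ i), if_pos rfl]
  congr 1
  rw [Finset.sum_congr rfl (fun j hj =>
        by rw [if_neg (fun h => (Finset.mem_erase.mp hj).1 h.symm)])]
  rw [Finset.sum_const, Finset.card_erase_of_mem (Finset.mem_univ i), Finset.card_univ,
    Fintype.card_fin, nsmul_eq_mul, Nat.cast_sub hm, Nat.cast_one]

/-- With `n, T ≥ 2`, `N = nT`, `N* = (n−1)(T−1)`, the matrix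
`M = (N*/N − 1)·I_N + T⁻¹·(ι_Tι_T′)⊗I_n + n⁻¹·I_T⊗(ι_nι_n′) − N⁻¹·(ι_Tι_T′)⊗(ι_nι_n′)`
is symmetric, has zero diagonal, and
`tr(M²) = n + T − n/T − T/n + 2/T + 2/n − 1/N − 3`. -/
theorem twoWayM_properties (n T : ℕ) (hn : 2 ≤ n) (hT : 2 ≤ T)
    (N Nstar : ℕ) (hN : N = n * T) (hNstar : Nstar = (n - 1) * (T - 1))
    (M : Matrix (Fin T × Fin n) (Fin T × Fin n) ℝ)
    (hM : M = ((Nstar : ℝ) / (N : ℝ) - 1) • (1 : Matrix (Fin T × Fin n) (Fin T × Fin n) ℝ)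
        + (T : ℝ)⁻¹ • ((Matrix.of (fun _ _ => (1 : ℝ)) : Matrix (Fin T) (Fin T) ℝ) ⊗ₖ
            (1 : Matrix (Fin n) (Fin n) ℝ))
        + (n : ℝ)⁻¹ • ((1 : Matrix (Fin T) (Fin T) ℝ) ⊗ₖ
            (Matrix.of (fun _ _ => (1 : ℝ)) : Matrix (Fin n) (Fin n) ℝ))
        - ((N : ℝ))⁻¹ • ((Matrix.of (fun _ _ => (1 : ℝ)) : Matrix (Fin T) (Fin T) ℝ) ⊗ₖ
            (Matrix.of (fun _ _ => (1 : ℝ)) : Matrix (Fin n) (Fin n) ℝ))) :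
    (Mᵀ = M) ∧
    (∀ i, M i i = 0) ∧
    (Matrix.trace (M * M) =
      (n : ℝ) + (T : ℝ) - (n : ℝ) / (T : ℝ) - (T : ℝ) / (n : ℝ)
        + 2 / (T : ℝ) + 2 / (n : ℝ) - 1 / (N : ℝ) - 3) := by
  have hn1 : 1 ≤ n := le_trans one_le_two hn
  have hT1 : 1 ≤ T := le_trans one_le_two hT
  have hn0 : (n : ℝ) ≠ 0 := by positivity
  have hT0 : (T : ℝ) ≠ 0 := by positivity
  set a : ℝ := (Nstar : ℝ) / (N : ℝ) - 1 with ha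
  have hMe : ∀ (t s : Fin T) (i j : Fin n), M (t, i) (s, j) =
      a * ((if t = s then (1:ℝ) else 0) * (if i = j then (1:ℝ) else 0))
        + (T : ℝ)⁻¹ * (if i = j then (1:ℝ) else 0)
        + (n : ℝ)⁻¹ * (if t = s then (1:ℝ) else 0) - (N : ℝ)⁻¹ := by
    intro t s i j
    rw [hM, ← Matrix.one_kronecker_one (α := ℝ) (m := Fin T) (n := Fin n)]
    simp only [Matrix.sub_apply, Matrix.add_apply, Matrix.smul_apply,
      Matrix.kroneckerMap_apply, Matrix.one_apply, Matrix.of_apply, smul_eq_mul]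
    by_cases h1 : t = s <;> by_cases h2 : i = j <;>
      simp [h1, h2, Prod.ext_iff]
  have hsym : Mᵀ = M := by
    ext ⟨t, i⟩ ⟨s, j⟩
    rw [Matrix.transpose_apply, hMe, hMe]
    by_cases h1 : t = s <;> by_cases h2 : i = j <;>
      simp [h1, h2, Ne.symm, eq_comm]
  have hNs : (Nstar : ℝ) = ((n:ℝ) - 1) * ((T:ℝ) - 1) := by
    rw [hNstar, Nat.cast_mul, Nat.cast_sub hn1, Nat.cast_sub hT1, Nat.cast_one]
  have hNr : (N : ℝ) = (n:ℝ) * (T:ℝ) := by rw [hN]; push_cast; ring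
  have hN0 : (N : ℝ) ≠ 0 := by rw [hNr]; positivity
  have hdiag0 : a + (T:ℝ)⁻¹ + (n:ℝ)⁻¹ - (N:ℝ)⁻¹ = 0 := by
    rw [ha, hNs, hNr]; field_simp; ring
  have hdiag : ∀ i, M i i = 0 := by
    rintro ⟨t, i⟩
    rw [hMe]
    rw [if_pos (rfl : t = t), if_pos (rfl : i = i)]
    linear_combination hdiag0
  refine ⟨hsym, hdiag, ?_⟩
  have hSy : ∀ p q, M q p = M p q := fun p q => congrFun (congrFun hsym p) q
  have htr : Matrix.trace (M * M) =
      ∑ t : Fin T, ∑ i : Fin n, ∑ s : Fin T, ∑ j : Fin n,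
        ((a * ((if t = s then (1:ℝ) else 0) * (if i = j then (1:ℝ) else 0))
          + (T : ℝ)⁻¹ * (if i = j then (1:ℝ) else 0)
          + (n : ℝ)⁻¹ * (if t = s then (1:ℝ) else 0) - (N : ℝ)⁻¹) *
         (a * ((if t = s then (1:ℝ) else 0) * (if i = j then (1:ℝ) else 0))
          + (T : ℝ)⁻¹ * (if i = j then (1:ℝ) else 0)
          + (n : ℝ)⁻¹ * (if t = s then (1:ℝ) else 0) - (N : ℝ)⁻¹)) := by
    rw [Matrix.trace]
    simp only [Matrix.diag, Matrix.mul_apply]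
    rw [Fintype.sum_prod_type]
    refine Finset.sum_congr rfl fun t _ => Finset.sum_congr rfl fun i _ => ?_
    rw [Fintype.sum_prod_type]
    refine Finset.sum_congr rfl fun s _ => Finset.sum_congr rfl fun j _ => ?_
    rw [hSy (t, i) (s, j), hMe]
  rw [htr]
  have h1 : ∀ (u : ℝ) (i : Fin n), ∑ j : Fin n,
      ((a * (u * (if i = j then (1:ℝ) else 0))
          + (T : ℝ)⁻¹ * (if i = j then (1:ℝ) else 0)
          + (n : ℝ)⁻¹ * u - (N : ℝ)⁻¹) *
       (a * (u * (if i = j then (1:ℝ) else 0))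
          + (T : ℝ)⁻¹ * (if i = j then (1:ℝ) else 0)
          + (n : ℝ)⁻¹ * u - (N : ℝ)⁻¹)) =
      ((a * (u * 1) + (T : ℝ)⁻¹ * 1 + (n : ℝ)⁻¹ * u - (N : ℝ)⁻¹) *
       (a * (u * 1) + (T : ℝ)⁻¹ * 1 + (n : ℝ)⁻¹ * u - (N : ℝ)⁻¹))
      + ((n:ℝ) - 1) *
      ((a * (u * 0) + (T : ℝ)⁻¹ * 0 + (n : ℝ)⁻¹ * u - (N : ℝ)⁻¹) *
       (a * (u * 0) + (T : ℝ)⁻¹ * 0 + (n : ℝ)⁻¹ * u - (N : ℝ)⁻¹)) :=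
    fun u i => sum_delta hn1 i (fun v =>
      (a * (u * v) + (T : ℝ)⁻¹ * v + (n : ℝ)⁻¹ * u - (N : ℝ)⁻¹) *
      (a * (u * v) + (T : ℝ)⁻¹ * v + (n : ℝ)⁻¹ * u - (N : ℝ)⁻¹))
  simp only [h1]
  have h2 : ∀ t : Fin T, ∑ s : Fin T,
      (((a * ((if t = s then (1:ℝ) else 0) * 1) + (T : ℝ)⁻¹ * 1
          + (n : ℝ)⁻¹ * (if t = s then (1:ℝ) else 0) - (N : ℝ)⁻¹) *
        (a * ((if t = s then (1:ℝ) else 0) * 1) + (T : ℝ)⁻¹ * 1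
          + (n : ℝ)⁻¹ * (if t = s then (1:ℝ) else 0) - (N : ℝ)⁻¹))
      + ((n:ℝ) - 1) *
       ((a * ((if t = s then (1:ℝ) else 0) * 0) + (T : ℝ)⁻¹ * 0
          + (n : ℝ)⁻¹ * (if t = s then (1:ℝ) else 0) - (N : ℝ)⁻¹) *
        (a * ((if t = s then (1:ℝ) else 0) * 0) + (T : ℝ)⁻¹ * 0
          + (n : ℝ)⁻¹ * (if t = s then (1:ℝ) else 0) - (N : ℝ)⁻¹))) =
      (((a * ((1:ℝ) * 1) + (T : ℝ)⁻¹ * 1 + (n : ℝ)⁻¹ * 1 - (N : ℝ)⁻¹) *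
        (a * ((1:ℝ) * 1) + (T : ℝ)⁻¹ * 1 + (n : ℝ)⁻¹ * 1 - (N : ℝ)⁻¹))
      + ((n:ℝ) - 1) *
       ((a * ((1:ℝ) * 0) + (T : ℝ)⁻¹ * 0 + (n : ℝ)⁻¹ * 1 - (N : ℝ)⁻¹) *
        (a * ((1:ℝ) * 0) + (T : ℝ)⁻¹ * 0 + (n : ℝ)⁻¹ * 1 - (N : ℝ)⁻¹)))
      + ((T:ℝ) - 1) *
      (((a * ((0:ℝ) * 1) + (T : ℝ)⁻¹ * 1 + (n : ℝ)⁻¹ * 0 - (N : ℝ)⁻¹) *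
        (a * ((0:ℝ) * 1) + (T : ℝ)⁻¹ * 1 + (n : ℝ)⁻¹ * 0 - (N : ℝ)⁻¹))
      + ((n:ℝ) - 1) *
       ((a * ((0:ℝ) * 0) + (T : ℝ)⁻¹ * 0 + (n : ℝ)⁻¹ * 0 - (N : ℝ)⁻¹) *
        (a * ((0:ℝ) * 0) + (T : ℝ)⁻¹ * 0 + (n : ℝ)⁻¹ * 0 - (N : ℝ)⁻¹))) :=
    fun t => sum_delta hT1 t (fun u =>
      ((a * (u * 1) + (T : ℝ)⁻¹ * 1 + (n : ℝ)⁻¹ * u - (N : ℝ)⁻¹) *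
       (a * (u * 1) + (T : ℝ)⁻¹ * 1 + (n : ℝ)⁻¹ * u - (N : ℝ)⁻¹))
      + ((n:ℝ) - 1) *
      ((a * (u * 0) + (T : ℝ)⁻¹ * 0 + (n : ℝ)⁻¹ * u - (N : ℝ)⁻¹) *
       (a * (u * 0) + (T : ℝ)⁻¹ * 0 + (n : ℝ)⁻¹ * u - (N : ℝ)⁻¹)))
  rw [Finset.sum_congr rfl (fun t _ => Finset.sum_congr rfl (fun i (_ : i ∈ univ) => h2 t))]
  simp only [Finset.sum_const, Finset.card_univ, Fintype.card_fin, nsmul_eq_mul]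
  rw [ha, hNs, hNr]
  field_simp
  ring
end

section
/- Let P be a symmetric idempotent real N×N matrix with tr(P) = K > 0 and diagonal entries p_ii satisfying p_ii ≤ C_p for all i, let D be the diagonal matrix with entries p_ii, and let Ω be a diagonal matrix with diagonal entries ω_i ≥ ς² for some ς² > 0. Then (2/K)·tr[ (P − D)Ω(P − D)Ω ] ≥ 2ς⁴·(1 − C_p); in particular, if C_p < 1 then (2/K)·tr[ (P − D)Ω(P − D)Ω ] > 0. -/
open Matrix Finset

/-- Let `P` be a symmetric idempotent real `N×N` matrix with
`tr(P) = K > 0` and diagonal entries `p_ii ≤ C_p`, let `D` be the diagonal matrix of the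
`p_ii`, and let `Ω` be diagonal with entries `ω_i ≥ ς² > 0`. Then
`(2/K)·tr[(P − D)Ω(P − D)Ω] ≥ 2ς⁴·(1 − C_p)`; in particular, if `C_p < 1` the quantity is
positive. -/
theorem variance_lower_bound {N : ℕ}
    (P : Matrix (Fin N) (Fin N) ℝ) (hsymm : Pᵀ = P) (hidem : P * P = P)
    (K : ℝ) (hK : Matrix.trace P = K) (hKpos : 0 < K)
    (Cp : ℝ) (hCp : ∀ i, P i i ≤ Cp)
    (D : Matrix (Fin N) (Fin N) ℝ) (hD : D = Matrix.diagonal (fun i => P i i))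
    (ω : Fin N → ℝ) (ς2 : ℝ) (hς2 : 0 < ς2) (hω : ∀ i, ς2 ≤ ω i)
    (Ω : Matrix (Fin N) (Fin N) ℝ) (hΩ : Ω = Matrix.diagonal ω) :
    (2 / K * Matrix.trace ((P - D) * Ω * (P - D) * Ω) ≥ 2 * ς2 ^ 2 * (1 - Cp)) ∧
    (Cp < 1 → 0 < 2 / K * Matrix.trace ((P - D) * Ω * (P - D) * Ω)) := by
  set Q : Matrix (Fin N) (Fin N) ℝ := P - D with hQ
  have hPsym : ∀ i j, P j i = P i j := by
    intro i j
    have := congrFun (congrFun hsymm j) i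
    rw [Matrix.transpose_apply] at this
    exact this.symm
  have hQsym : ∀ i j, Q j i = Q i j := by
    intro i j
    by_cases h : i = j
    · rw [h]
    · simp [hQ, hD, Matrix.sub_apply, Matrix.diagonal_apply, h, Ne.symm h, hPsym i j]
  -- diagonal entries of P via idempotence+symmetry
  have hdiag : ∀ i, P i i = ∑ j, (P i j)^2 := by
    intro i
    have := congrArg (fun M => M i i) hidem
    simp [Matrix.mul_apply] at this
    rw [← this]
    congr 1; ext j; rw [hPsym j i]; ring
  have hPnn : ∀ i, 0 ≤ P i i := fun i => by
    rw [hdiag i]; exact Finset.sum_nonneg fun j _ => sq_nonneg _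
  -- trace formula
  have htr : Matrix.trace (Q * Ω * Q * Ω) = ∑ i, ∑ j, ω i * ω j * (Q i j)^2 := by
    subst hΩ
    rw [mul_assoc]
    simp only [Matrix.trace, Matrix.diag, Matrix.mul_apply, Matrix.diagonal_apply,
      mul_ite, mul_zero, Finset.sum_ite_eq, Finset.sum_ite_eq', Finset.mem_univ, if_true]
    refine Finset.sum_congr rfl fun i _ => Finset.sum_congr rfl fun j _ => ?_
    rw [hQsym i j]; ring
  -- sum of squares of Q
  have hsumQ : ∑ i, ∑ j, (Q i j)^2 = K - ∑ i, (P i i)^2 := by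
    have h1 : ∀ i, ∑ j, (Q i j)^2 = P i i - (P i i)^2 := by
      intro i
      have : ∀ j, (Q i j)^2 = (P i j)^2 - (if j = i then (P i i)^2 else 0) := by
        intro j
        by_cases h : j = i
        · simp [hQ, hD, Matrix.sub_apply, Matrix.diagonal_apply, h]
        · have h' : i ≠ j := fun hh => h hh.symm
          simp [hQ, hD, Matrix.sub_apply, Matrix.diagonal_apply, h, h']
      simp only [this, Finset.sum_sub_distrib, Finset.sum_ite_eq', Finset.mem_univ, if_true]
      rw [← hdiag i]
    simp only [h1, Finset.sum_sub_distrib]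
    rw [← hK]; rfl
  have hKle : ∑ i, (P i i)^2 ≤ Cp * K := by
    rw [← hK]
    unfold Matrix.trace Matrix.diag
    rw [Finset.mul_sum]
    exact Finset.sum_le_sum fun i _ => by
      have := hPnn i; have := hCp i; nlinarith
  have hlow : ς2^2 * (K * (1 - Cp)) ≤ Matrix.trace (Q * Ω * Q * Ω) := by
    rw [htr]
    have step1 : ∑ i, ∑ j, ς2^2 * (Q i j)^2 ≤ ∑ i, ∑ j, ω i * ω j * (Q i j)^2 := by
      refine Finset.sum_le_sum fun i _ => Finset.sum_le_sum fun j _ => ?_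
      have h1 := hω i; have h2 := hω j
      have : ς2^2 ≤ ω i * ω j := by nlinarith
      nlinarith [sq_nonneg (Q i j)]
    calc ς2^2 * (K * (1 - Cp)) ≤ ς2^2 * (K - ∑ i, (P i i)^2) := by nlinarith
      _ = ∑ i, ∑ j, ς2^2 * (Q i j)^2 := by
          rw [← hsumQ, Finset.mul_sum]; congr 1; ext i; rw [Finset.mul_sum]
      _ ≤ _ := step1
  have key : 2 / K * Matrix.trace (Q * Ω * Q * Ω) ≥ 2 * ς2 ^ 2 * (1 - Cp) := by
    rw [ge_iff_le, div_mul_eq_mul_div, le_div_iff₀ hKpos]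
    nlinarith
  refine ⟨key, fun h => lt_of_lt_of_le ?_ key⟩
  have h1 : 0 < 1 - Cp := by linarith
  positivity
end

section
/- Let W_LIM = (ι_nι_n′ − I_n)/(n−1) be the linear-in-means adjacency matrix (zero diagonal, all off-diagonal entries equal to 1/(n−1)), and let J be the two-way within-transformation matrix. Then J·(I_T ⊗ W_LIM) = −(n−1)⁻¹·J. Consequently, for any real ρ, J·(ρ(I_T ⊗ W_LIM)) = ρ*·J with ρ* = −ρ/(n−1). -/
open Matrix
open scoped Kronecker

lemma ones_mul_ones (n : ℕ) :
    (Matrix.of (fun _ _ => (1 : ℝ)) : Matrix (Fin n) (Fin n) ℝ) *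
      Matrix.of (fun _ _ => (1 : ℝ)) = (n : ℝ) • Matrix.of (fun _ _ => (1 : ℝ)) := by
  ext i j
  simp [Matrix.mul_apply]

/-- Let `W_LIM = (ι_nι_n′ − I_n)/(n−1)` be the linear-in-means adjacency
matrix and `J` the two-way within-transformation matrix. Then
`J·(I_T ⊗ W_LIM) = −(n−1)⁻¹·J`, and for any real `ρ`,
`J·(ρ(I_T ⊗ W_LIM)) = ρ*·J` with `ρ* = −ρ/(n−1)`. -/
theorem linear_in_means_annihilation (n T : ℕ) (hn : 2 ≤ n) (hT : 2 ≤ T)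
    (W : Matrix (Fin n) (Fin n) ℝ)
    (hW : W = ((n : ℝ) - 1)⁻¹ • ((Matrix.of (fun _ _ => (1 : ℝ)) : Matrix (Fin n) (Fin n) ℝ)
        - (1 : Matrix (Fin n) (Fin n) ℝ)))
    (J : Matrix (Fin T × Fin n) (Fin T × Fin n) ℝ) (hJ : J = twoWayJ n T) :
    (J * ((1 : Matrix (Fin T) (Fin T) ℝ) ⊗ₖ W) = (-((n : ℝ) - 1)⁻¹) • J) ∧
    (∀ ρ : ℝ, J * (ρ • ((1 : Matrix (Fin T) (Fin T) ℝ) ⊗ₖ W)) = (-ρ / ((n : ℝ) - 1)) • J) := by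
  have hn0 : (n : ℝ) ≠ 0 := by positivity
  set E : Matrix (Fin n) (Fin n) ℝ := Matrix.of (fun _ _ => (1 : ℝ)) with hE
  set B : Matrix (Fin n) (Fin n) ℝ := 1 - (n : ℝ)⁻¹ • E with hB
  have hBE : B * E = 0 := by
    rw [hB, Matrix.sub_mul, Matrix.one_mul, Matrix.smul_mul, ones_mul_ones,
      smul_smul, inv_mul_cancel₀ hn0, one_smul, sub_self]
  have hBW : B * W = (-(((n : ℝ) - 1)⁻¹)) • B := by
    rw [hW, Matrix.mul_smul, Matrix.mul_sub, hBE, Matrix.mul_one, zero_sub, smul_neg, neg_smul]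
  have key : J * ((1 : Matrix (Fin T) (Fin T) ℝ) ⊗ₖ W) = (-((n : ℝ) - 1)⁻¹) • J := by
    rw [hJ, twoWayJ, ← Matrix.mul_kronecker_mul, Matrix.mul_one, hBW,
      Matrix.kronecker_smul]
  refine ⟨key, fun ρ => ?_⟩
  rw [Matrix.mul_smul, key, smul_smul]
  congr 1
  ring
end
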